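/- Suppose X is a nonnegative random variable with E[X^β] = α/β, where β − α = 1, and its (α,β)-generalized equilibrium transform X* satisfies P[X* > t] ≤ P[X > t]/p for all t. Then for all t ≥ 0 with P[X > t] > 0: E[X − t | X > t] ≤ 1/(p β t^α). -/

import Mathlib

/-!
Conditioning on `X^(β) = v` gives `P[X* > t] = E[(1 - (t / X^(β))^α)⁺]`, and the power-bias
density `x^β / E[X^β] = (β/α) x^β` turns this into `(β/α) E[X^β - X t^α; X > t]`.
The tangent line of the convex map `x ↦ x^β` at `t` (Bernoulli's inequality) gives
`x^β - x t^α ≥ α t^α (x - t)` for `x ≥ t`, so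
`β t^α E[X - t; X > t] ≤ P[X* > t] ≤ P[X > t] / p`.
-/

open MeasureTheory

/-- The law of `V_a`, with density `a x^(a-1)` on `(0,1]`. -/
noncomputable def vLaw (a : ℝ) : Measure ℝ :=
  (volume.restrict (Set.Ioc (0 : ℝ) 1)).withDensity
    (fun u => ENNReal.ofReal (a * u ^ (a - 1)))

/-- The `β`-power bias of a law `μ`. -/
noncomputable def powerBias (β : ℝ) (μ : Measure ℝ) : Measure ℝ :=
  μ.withDensity (fun x => ENNReal.ofReal (x ^ β / ∫ y, y ^ β ∂μ))

/-- The `(α,β)`-generalized equilibrium transform of `μ`: the law of `V_α · X^(β)`. -/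
noncomputable def eqLaw (α β : ℝ) (μ : Measure ℝ) : Measure ℝ :=
  ((vLaw α).prod (powerBias β μ)).map (fun p => p.1 * p.2)

open Set

lemma rpow_add_mul_sub_le_rpow {β t v : ℝ} (hβ : 1 ≤ β) (ht : 0 < t) (hv : 0 ≤ v) :
    t ^ β + β * t ^ (β - 1) * (v - t) ≤ v ^ β := by
  have hbern := one_add_mul_self_le_rpow_one_add
    (by linarith [div_nonneg hv ht.le] : -1 ≤ v / t - 1) hβ
  rw [add_sub_cancel, Real.div_rpow hv ht.le, le_div_iff₀ (Real.rpow_pos_of_pos ht β)] at hbern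
  have htβ : t ^ β = t ^ (β - 1) * t := by
    rw [← Real.rpow_add_one ht.ne', sub_add_cancel]
  calc t ^ β + β * t ^ (β - 1) * (v - t) = (1 + β * (v / t - 1)) * t ^ β := by
        rw [htβ]; field_simp
    _ ≤ v ^ β := hbern

-- The right side is the power-bias density at `v` times `P[V_α > t / v]`.
lemma mul_rpow_mul_sub_le_rpow_div_mul {α β t v : ℝ} (hα : 0 < α) (hαβ : β - α = 1)
    (ht : 0 ≤ t) (hv : 0 < v) :
    β * t ^ α * (v - t) ≤ v ^ β / (α / β) * (1 - (t / v) ^ α) := by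
  obtain rfl : β = α + 1 := by linarith
  rcases ht.eq_or_lt with rfl | ht
  · simp only [Real.zero_rpow hα.ne', zero_div, mul_zero, zero_mul, sub_zero, mul_one]
    positivity
  have htangent := rpow_add_mul_sub_le_rpow (by linarith) ht hv.le (β := α + 1)
  rw [add_sub_cancel_right, Real.rpow_add_one ht.ne'] at htangent
  have hrhs : v ^ (α + 1) / (α / (α + 1)) * (1 - (t / v) ^ α)
      = (α + 1) / α * (v ^ (α + 1) - v * t ^ α) := by
    rw [Real.div_rpow ht.le hv.le, Real.rpow_add_one hv.ne']
    field_simp [(Real.rpow_pos_of_pos hv α).ne']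
  calc (α + 1) * t ^ α * (v - t) = (α + 1) / α * (α * t ^ α * (v - t)) := by field_simp
    _ ≤ (α + 1) / α * (v ^ (α + 1) - v * t ^ α) := by gcongr; linarith
    _ = _ := hrhs.symm

section vLaw

variable {α : ℝ}

instance (a : ℝ) : SFinite (vLaw a) := by unfold vLaw; infer_instance

lemma vLaw_Ioi (hα : 0 < α) {s : ℝ} (hs0 : 0 ≤ s) (hs1 : s ≤ 1) :
    vLaw α (Ioi s) = ENNReal.ofReal (1 - s ^ α) := by
  have hint : IntegrableOn (fun u => α * u ^ (α - 1)) (Ioc s 1) := by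
    have := (intervalIntegral.intervalIntegrable_rpow' (a := s) (b := 1)
      (by linarith : (-1 : ℝ) < α - 1)).const_mul α
    rwa [intervalIntegrable_iff, uIoc_of_le hs1] at this
  have hnn : 0 ≤ᵐ[volume.restrict (Ioc s 1)] fun u => α * u ^ (α - 1) := by
    filter_upwards [ae_restrict_mem measurableSet_Ioc] with u hu
    exact mul_nonneg hα.le (Real.rpow_nonneg (hs0.trans hu.1.le) _)
  rw [vLaw, withDensity_apply _ measurableSet_Ioi, Measure.restrict_restrict measurableSet_Ioi,
    inter_comm, Ioc_inter_Ioi, sup_of_le_right hs0,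
    ← ofReal_integral_eq_lintegral_ofReal hint hnn, ← intervalIntegral.integral_of_le hs1,
    intervalIntegral.integral_const_mul, integral_rpow (Or.inl (by linarith)), sub_add_cancel,
    Real.one_rpow]
  field_simp

lemma isProbabilityMeasure_vLaw (hα : 0 < α) : IsProbabilityMeasure (vLaw α) := by
  constructor
  have hsupp : vLaw α (Ioi 0)ᶜ = 0 := by
    rw [vLaw, withDensity_apply _ measurableSet_Ioi.compl,
      Measure.restrict_restrict measurableSet_Ioi.compl]
    simp [compl_Ioi, Iic_inter_Ioc_of_le]
  rw [← measure_add_measure_compl measurableSet_Ioi, hsupp, add_zero,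
    vLaw_Ioi hα le_rfl zero_le_one, Real.zero_rpow hα.ne', sub_zero, ENNReal.ofReal_one]

lemma ofReal_one_sub_rpow_le_vLaw_Ioi (hα : 0 < α) {s : ℝ} (hs : 0 ≤ s) :
    ENNReal.ofReal (1 - s ^ α) ≤ vLaw α (Ioi s) := by
  rcases le_total s 1 with hs1 | hs1
  · exact (vLaw_Ioi hα hs hs1).ge
  · rw [ENNReal.ofReal_of_nonpos (by linarith [Real.one_le_rpow hs1 hα.le])]
    exact bot_le

end vLaw

section

variable {β : ℝ} {μ : Measure ℝ}

lemma isProbabilityMeasure_powerBias (hnn : 0 ≤ᵐ[μ] fun x => x ^ β)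
    (hmom : ∫ x, x ^ β ∂μ ≠ 0) : IsProbabilityMeasure (powerBias β μ) := by
  constructor
  have hpos : 0 ≤ ∫ x, x ^ β ∂μ := integral_nonneg_of_ae hnn
  rw [powerBias, withDensity_apply _ MeasurableSet.univ, Measure.restrict_univ,
    ← ofReal_integral_eq_lintegral_ofReal ((Integrable.of_integral_ne_zero hmom).div_const _)
      (by filter_upwards [hnn] with x hx using div_nonneg hx hpos),
    integral_div, div_self hmom, ENNReal.ofReal_one]

lemma isProbabilityMeasure_eqLaw {α : ℝ} (hα : 0 < α) (hnn : 0 ≤ᵐ[μ] fun x => x ^ β)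
    (hmom : ∫ x, x ^ β ∂μ ≠ 0) : IsProbabilityMeasure (eqLaw α β μ) := by
  have := isProbabilityMeasure_vLaw hα
  have := isProbabilityMeasure_powerBias hnn hmom
  exact Measure.isProbabilityMeasure_map (by fun_prop)

lemma eqLaw_Ioi (α t : ℝ) [SFinite (powerBias β μ)] :
    eqLaw α β μ (Ioi t) = ∫⁻ v, vLaw α {u | t < u * v} ∂powerBias β μ := by
  rw [eqLaw, Measure.map_apply (by fun_prop) measurableSet_Ioi,
    Measure.prod_apply_symm (measurableSet_Ioi.preimage (by fun_prop))]
  rfl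

lemma setLIntegral_one_sub_rpow_le_eqLaw_Ioi {α t : ℝ} (hα : 0 < α) (ht : 0 ≤ t)
    [SFinite (powerBias β μ)] :
    ∫⁻ v in Ioi t, ENNReal.ofReal (1 - (t / v) ^ α) ∂powerBias β μ ≤
      eqLaw α β μ (Ioi t) := by
  rw [eqLaw_Ioi]
  refine (setLIntegral_mono' measurableSet_Ioi fun v (hv : t < v) => ?_).trans
    (setLIntegral_le_lintegral _ _)
  have hv0 : 0 < v := ht.trans_lt hv
  have hset : {u : ℝ | t < u * v} = Ioi (t / v) := by
    ext u; simp [div_lt_iff₀ hv0]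
  rw [hset]
  exact ofReal_one_sub_rpow_le_vLaw_Ioi hα (div_nonneg ht hv0.le)

end

lemma mul_setIntegral_sub_le_eqLaw_Ioi {α β t : ℝ} {μ : Measure ℝ} (hα : 0 < α)
    (hαβ : β - α = 1) (hnn : 0 ≤ᵐ[μ] fun x => x) (hmom : ∫ x, x ^ β ∂μ = α / β)
    (ht : 0 ≤ t) :
    β * t ^ α * ∫ x in Ioi t, (x - t) ∂μ ≤ (eqLaw α β μ (Ioi t)).toReal := by
  have hβ : 0 < β := by linarith
  have hnnβ : 0 ≤ᵐ[μ] fun x => x ^ β := hnn.mono fun x hx => Real.rpow_nonneg hx β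
  have hmom0 : ∫ x, x ^ β ∂μ ≠ 0 := by rw [hmom]; positivity
  have := isProbabilityMeasure_powerBias hnnβ hmom0
  have := isProbabilityMeasure_eqLaw hα hnnβ hmom0
  have hdens : powerBias β μ = μ.withDensity fun x => ENNReal.ofReal (x ^ β / (α / β)) := by
    rw [powerBias, hmom]
  have hlin :
      ∫⁻ x in Ioi t, ENNReal.ofReal (β * t ^ α * (x - t)) ∂μ ≤ eqLaw α β μ (Ioi t) :=
    calc ∫⁻ x in Ioi t, ENNReal.ofReal (β * t ^ α * (x - t)) ∂μ
        ≤ ∫⁻ x in Ioi t,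
            ENNReal.ofReal (x ^ β / (α / β)) * ENNReal.ofReal (1 - (t / x) ^ α) ∂μ :=
          setLIntegral_mono' measurableSet_Ioi fun x (hx : t < x) => by
            have hx0 : 0 < x := ht.trans_lt hx
            rw [← ENNReal.ofReal_mul (by positivity)]
            exact ENNReal.ofReal_le_ofReal (mul_rpow_mul_sub_le_rpow_div_mul hα hαβ ht hx0)
      _ = ∫⁻ x in Ioi t, ENNReal.ofReal (1 - (t / x) ^ α) ∂powerBias β μ := by
          rw [hdens, setLIntegral_withDensity_eq_setLIntegral_mul _ (by fun_prop) (by fun_prop)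
            measurableSet_Ioi]
          rfl
      _ ≤ eqLaw α β μ (Ioi t) := setLIntegral_one_sub_rpow_le_eqLaw_Ioi hα ht
  have hnn_sub : 0 ≤ᵐ[μ.restrict (Ioi t)] fun x => β * t ^ α * (x - t) := by
    filter_upwards [ae_restrict_mem measurableSet_Ioi] with x (hx : t < x)
    have : 0 ≤ x - t := by linarith
    positivity
  calc β * t ^ α * ∫ x in Ioi t, (x - t) ∂μ = ∫ x in Ioi t, β * t ^ α * (x - t) ∂μ :=
        (integral_const_mul _ _).symm
    _ = (∫⁻ x in Ioi t, ENNReal.ofReal (β * t ^ α * (x - t)) ∂μ).toReal :=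
        integral_eq_lintegral_of_nonneg_ae hnn_sub (by fun_prop)
    _ ≤ (eqLaw α β μ (Ioi t)).toReal := ENNReal.toReal_mono (measure_ne_top _ _) hlin

theorem stmt5 (μ : Measure ℝ) (α β p : ℝ)
    (hα : 0 < α) (hαβ : β - α = 1) (hp : 0 < p)
    (hsupp : μ (Set.Iio 0) = 0)
    (hmom : ∫ x, x ^ β ∂μ = α / β)
    (hstar : ∀ t : ℝ, (eqLaw α β μ {x | t < x}).toReal ≤ (μ {x | t < x}).toReal / p) :
    ∀ t : ℝ, 0 ≤ t → 0 < (μ {x | t < x}).toReal →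
      p * β * t ^ α * ∫ x in {x | t < x}, (x - t) ∂μ ≤ (μ {x | t < x}).toReal := by
  intro t ht _
  have hnn : 0 ≤ᵐ[μ] fun x => x :=
    (measure_eq_zero_iff_ae_notMem.1 hsupp).mono fun x hx => not_lt.1 hx
  change p * β * t ^ α * ∫ x in Ioi t, (x - t) ∂μ ≤ (μ (Ioi t)).toReal
  calc p * β * t ^ α * ∫ x in Ioi t, (x - t) ∂μ
      = p * (β * t ^ α * ∫ x in Ioi t, (x - t) ∂μ) := by ring
    _ ≤ p * (eqLaw α β μ (Ioi t)).toReal := by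
        gcongr; exact mul_setIntegral_sub_le_eqLaw_Ioi hα hαβ hnn hmom ht
    _ ≤ p * ((μ (Ioi t)).toReal / p) := by gcongr; exact hstar t
    _ = (μ (Ioi t)).toReal := by field_simp
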